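/- arXiv:2312.02837 — 2 statements merged into one kernel-verified Lean document; each statement's English description precedes it below -/
import Mathlib

section
/- In dimension 2, parabolicity is a conformal invariant: if (M,g) is a parabolic Riemannian surface and f : M → ℝ is smooth and positive, then (M, f²g) is parabolic. -/
/- Chart model of a 2-dimensional Riemannian manifold: `M = ℝ²` with a metric
given by a matrix field `g`; `LB g` is the Laplace–Beltrami operator and
`Parabolic g` says every `C²` subharmonic function bounded from above is constant. -/

/-- Partial derivative in direction `i`. -/
noncomputable def pd (i : Fin 2) (u : (Fin 2 → ℝ) → ℝ) : (Fin 2 → ℝ) → ℝ :=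
  fun x => fderiv ℝ u x (Pi.single i 1)

/-- The Laplace–Beltrami operator of the metric `g`. -/
noncomputable def LB (g : (Fin 2 → ℝ) → Matrix (Fin 2) (Fin 2) ℝ)
    (u : (Fin 2 → ℝ) → ℝ) : (Fin 2 → ℝ) → ℝ :=
  fun x => (Real.sqrt (g x).det)⁻¹ *
    ∑ i, pd i (fun y => Real.sqrt (g y).det * ∑ j, ((g y)⁻¹ i j) * pd j u y) x

/-- Parabolicity: every subharmonic function bounded from above is constant. -/
def Parabolic (g : (Fin 2 → ℝ) → Matrix (Fin 2) (Fin 2) ℝ) : Prop :=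
  ∀ u : (Fin 2 → ℝ) → ℝ, ContDiff ℝ 2 u → (∀ x, 0 ≤ LB g u x) →
    BddAbove (Set.range u) → ∀ x y, u x = u y

lemma conf_key (g : (Fin 2 → ℝ) → Matrix (Fin 2) (Fin 2) ℝ)
    (hpos : ∀ x, (g x).PosDef)
    (f : (Fin 2 → ℝ) → ℝ) (hfpos : ∀ x, 0 < f x) (u : (Fin 2 → ℝ) → ℝ) (x : Fin 2 → ℝ) :
    LB (fun x => (f x) ^ 2 • g x) u x = ((f x) ^ 2)⁻¹ * LB g u x := by
  have hdet : ∀ y, Real.sqrt ((f y) ^ 2 • g y).det = (f y) ^ 2 * Real.sqrt (g y).det := by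
    intro y
    rw [Matrix.det_smul]
    simp only [Fintype.card_fin]
    rw [Real.sqrt_mul (sq_nonneg _), Real.sqrt_sq (sq_nonneg _)]
  have hinner : ∀ i, (fun y => Real.sqrt ((f y) ^ 2 • g y).det *
      ∑ j, (((f y) ^ 2 • g y)⁻¹ i j) * pd j u y)
      = fun y => Real.sqrt (g y).det * ∑ j, ((g y)⁻¹ i j) * pd j u y := by
    intro i
    funext y
    have hne : (f y) ^ 2 ≠ 0 := pow_ne_zero _ (hfpos y).ne'
    have : Invertible ((f y) ^ 2) := invertibleOfNonzero hne
    rw [Matrix.inv_smul (A := g y) _ (isUnit_iff_ne_zero.mpr (hpos y).det_pos.ne'), hdet y]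
    simp only [Matrix.smul_apply, smul_eq_mul, invOf_eq_inv]
    rw [Finset.mul_sum, Finset.mul_sum]
    apply Finset.sum_congr rfl
    intro j _
    field_simp
    linear_combination (Real.sqrt (g y).det * (g y)⁻¹ i j * pd j u y) * mul_inv_cancel₀ (hfpos y).ne'
  simp only [LB]
  have hsum : (∑ i, pd i (fun y => Real.sqrt ((f y) ^ 2 • g y).det *
      ∑ j, (((f y) ^ 2 • g y)⁻¹ i j) * pd j u y) x)
      = ∑ i, pd i (fun y => Real.sqrt (g y).det * ∑ j, ((g y)⁻¹ i j) * pd j u y) x :=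
    Finset.sum_congr rfl fun i _ => by rw [hinner i]
  rw [hsum, hdet x, mul_inv, mul_assoc]

/-- In dimension 2 parabolicity is a conformal invariant: if `(M,g)`
is parabolic and `f` is smooth and positive, then `(M, f²g)` is parabolic. -/
theorem stmt1 (g : (Fin 2 → ℝ) → Matrix (Fin 2) (Fin 2) ℝ)
    (hg : ∀ i j, ContDiff ℝ (⊤ : ℕ∞) fun x => g x i j)
    (hpos : ∀ x, (g x).PosDef)
    (f : (Fin 2 → ℝ) → ℝ) (hf : ContDiff ℝ (⊤ : ℕ∞) f) (hfpos : ∀ x, 0 < f x)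
    (hpar : Parabolic g) :
    Parabolic (fun x => (f x) ^ 2 • g x) := by
  intro u hu hsub hbdd x y
  apply hpar u hu _ hbdd
  intro z
  have h := hsub z
  rw [conf_key g hpos f hfpos u z] at h
  have hfz : (0:ℝ) < ((f z) ^ 2)⁻¹ := inv_pos.mpr (pow_pos (hfpos z) 2)
  exact nonneg_of_mul_nonneg_right h hfz
end

section
/- Let π : S → ℝ be a Killing submersion from a complete 2-dimensional Riemannian manifold S with Killing field of norm μ(x) > 0. If ∫_{-∞}^0 dx/μ(x) < ∞ (or ∫_0^∞ dx/μ(x) < ∞), then the function F : S → ℝ defined by F(p) = ∫_{π(p)}^0 dx/μ(x) is a bounded non-constant harmonic function on S; in particular, S is not parabolic. -/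
open MeasureTheory

noncomputable def warp (μ : ℝ → ℝ) : (Fin 2 → ℝ) → Matrix (Fin 2) (Fin 2) ℝ :=
  fun x => Matrix.of ![![(1 : ℝ), 0], ![0, (μ (x 0)) ^ 2]]

-- auxiliary lemmas

lemma warp_det (μ : ℝ → ℝ) (y : Fin 2 → ℝ) : (warp μ y).det = (μ (y 0)) ^ 2 := by
  simp [warp, Matrix.det_fin_two_of]

lemma warp_sqrt_det (μ : ℝ → ℝ) (hpos : ∀ x, 0 < μ x) (y : Fin 2 → ℝ) :
    Real.sqrt ((warp μ y).det) = μ (y 0) := by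
  rw [warp_det, Real.sqrt_sq (hpos _).le]

lemma warp_inv (μ : ℝ → ℝ) (hpos : ∀ x, 0 < μ x) (y : Fin 2 → ℝ) :
    (warp μ y)⁻¹ = Matrix.of ![![(1 : ℝ), 0], ![0, ((μ (y 0)) ^ 2)⁻¹]] := by
  apply Matrix.inv_eq_right_inv
  have h : (μ (y 0)) ^ 2 ≠ 0 := pow_ne_zero _ (hpos _).ne'
  ext i j
  fin_cases i <;> fin_cases j <;>
    simp [warp, Matrix.mul_apply, Fin.sum_univ_two, h, Matrix.one_apply]

lemma hasFDerivAt_comp_eval (H : ℝ → ℝ) (d : ℝ) (p : Fin 2 → ℝ)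
    (hH : HasDerivAt H d (p 0)) :
    HasFDerivAt (fun q : Fin 2 → ℝ => H (q 0))
      (d • (ContinuousLinearMap.proj (R := ℝ) (φ := fun _ : Fin 2 => ℝ) 0)) p := by
  have h2 : HasFDerivAt (fun q : Fin 2 → ℝ => q 0)
      (ContinuousLinearMap.proj (R := ℝ) (φ := fun _ : Fin 2 => ℝ) 0) p :=
    (ContinuousLinearMap.proj (R := ℝ) (φ := fun _ : Fin 2 => ℝ) 0).hasFDerivAt
  have := hH.hasFDerivAt.comp p h2
  refine this.congr_fderiv ?_
  ext v
  simp [ContinuousLinearMap.smulRight, mul_comm]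

lemma pd_comp_eval (H : ℝ → ℝ) (D : ℝ → ℝ) (hH : ∀ t, HasDerivAt H (D t) t)
    (j : Fin 2) (p : Fin 2 → ℝ) :
    pd j (fun q : Fin 2 → ℝ => H (q 0)) p = if j = 0 then D (p 0) else 0 := by
  have := (hasFDerivAt_comp_eval H (D (p 0)) p (hH (p 0))).fderiv
  simp only [pd, this]
  fin_cases j <;> simp

lemma LB_warp_zero (μ : ℝ → ℝ) (hpos : ∀ x, 0 < μ x) (H : ℝ → ℝ) (c : ℝ)
    (hH : ∀ t, HasDerivAt H (c * (μ t)⁻¹) t) :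
    LB (warp μ) (fun q : Fin 2 → ℝ => H (q 0)) = 0 := by
  funext x
  have hpd := pd_comp_eval H (fun t => c * (μ t)⁻¹) hH
  unfold LB
  have h0 : (fun y => Real.sqrt ((warp μ y).det) *
      ∑ j, ((warp μ y)⁻¹ 0 j) * pd j (fun q : Fin 2 → ℝ => H (q 0)) y) = fun _ => c := by
    funext y
    rw [warp_sqrt_det μ hpos, warp_inv μ hpos, Fin.sum_univ_two, hpd, hpd]
    have : μ (y 0) ≠ 0 := (hpos _).ne'
    simp
    field_simp
  have h1 : (fun y => Real.sqrt ((warp μ y).det) *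
      ∑ j, ((warp μ y)⁻¹ 1 j) * pd j (fun q : Fin 2 → ℝ => H (q 0)) y) = fun _ => (0:ℝ) := by
    funext y
    rw [warp_sqrt_det μ hpos, warp_inv μ hpos, Fin.sum_univ_two, hpd, hpd]
    simp
  rw [Fin.sum_univ_two, h0, h1]
  simp [pd]

/-- If `∫_{-∞}^0 dx/μ < ∞` (or `∫_0^∞ dx/μ < ∞`), then
`F(p) = ∫_{π(p)}^0 dx/μ(x)` is a non-constant harmonic function on `S`, bounded on
the corresponding side; in particular `S` is not parabolic. -/
theorem stmt10 (μ : ℝ → ℝ) (hμ : ContDiff ℝ (⊤ : ℕ∞) μ) (hpos : ∀ x, 0 < μ x)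
    (hint : IntegrableOn (fun x => (μ x)⁻¹) (Set.Iic 0) ∨
      IntegrableOn (fun x => (μ x)⁻¹) (Set.Ici 0))
    (F : (Fin 2 → ℝ) → ℝ)
    (hF : ∀ p, F p = ∫ x in (p 0)..(0 : ℝ), (μ x)⁻¹) :
    LB (warp μ) F = 0
    ∧ ¬ (∀ p q, F p = F q)
    ∧ (BddAbove (Set.range F) ∨ BddBelow (Set.range F))
    ∧ ¬ Parabolic (warp μ) := by
  have hne : ∀ x, μ x ≠ 0 := fun x => (hpos x).ne'
  have hcont : Continuous fun x => (μ x)⁻¹ := hμ.continuous.inv₀ hne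
  have hii : ∀ a b : ℝ, IntervalIntegrable (fun x => (μ x)⁻¹) volume a b :=
    fun a b => hcont.intervalIntegrable a b
  set G : ℝ → ℝ := fun t => ∫ x in t..(0:ℝ), (μ x)⁻¹ with hG
  have hGd : ∀ t, HasDerivAt G (-(μ t)⁻¹) t := by
    intro t
    exact intervalIntegral.integral_hasDerivAt_left (hii t 0)
      (hcont.stronglyMeasurableAtFilter _ _) hcont.continuousAt
  have hGd' : ∀ t, HasDerivAt G ((-1) * (μ t)⁻¹) t := by
    intro t; simpa [neg_one_mul] using hGd t
  have hFG : F = fun q : Fin 2 → ℝ => G (q 0) := funext fun p => hF p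
  -- harmonicity
  have hharm : LB (warp μ) F = 0 := by
    rw [hFG]; exact LB_warp_zero μ hpos G (-1) hGd'
  -- non-constancy
  have hnc : ¬ (∀ p q, F p = F q) := by
    intro h
    have h1 := h (fun _ => (-1 : ℝ)) (fun _ => (0 : ℝ))
    rw [hF, hF] at h1
    have hposint : 0 < ∫ x in (-1 : ℝ)..(0:ℝ), (μ x)⁻¹ := by
      apply intervalIntegral.intervalIntegral_pos_of_pos_on (hii (-1) 0)
      · intro x _; exact inv_pos.mpr (hpos x)
      · norm_num
    rw [intervalIntegral.integral_same] at h1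
    linarith
  -- ContDiff of F
  have hGdiff : Differentiable ℝ G := fun t => (hGd t).differentiableAt
  have hderivG : deriv G = fun t => -(μ t)⁻¹ := funext fun t => (hGd t).deriv
  have hGc2 : ContDiff ℝ 2 G := by
    rw [show (2 : WithTop ℕ∞) = 1 + 1 from rfl, contDiff_succ_iff_deriv]
    refine ⟨hGdiff, fun h => by simp at h, ?_⟩
    rw [hderivG]
    exact (((hμ.of_le (by simp) : ContDiff ℝ 1 μ)).inv hne).neg
  have hFc2 : ContDiff ℝ 2 F := by
    rw [hFG]
    exact hGc2.comp (contDiff_pi.mp contDiff_id 0)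
  -- nonnegativity of G on the left, nonpositivity on the right
  have hGnonneg : ∀ t, t ≤ 0 → 0 ≤ G t := by
    intro t ht
    exact intervalIntegral.integral_nonneg ht (fun x _ => (inv_pos.mpr (hpos x)).le)
  -- boundedness
  have hbdd : BddAbove (Set.range F) ∨ BddBelow (Set.range F) := by
    rcases hint with hI | hI
    · left
      refine ⟨∫ x in Set.Iic (0:ℝ), (μ x)⁻¹, ?_⟩
      rintro _ ⟨p, rfl⟩
      rw [hF]
      rcases le_or_gt (p 0) 0 with h | h
      · rw [intervalIntegral.integral_of_le h]
        apply setIntegral_mono_set hI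
        · exact Filter.Eventually.of_forall fun x => (inv_pos.mpr (hpos x)).le
        · exact Filter.Eventually.of_forall fun x hx => hx.2
      · have h1 : (∫ x in (p 0)..(0:ℝ), (μ x)⁻¹) ≤ 0 := by
          rw [intervalIntegral.integral_symm]
          simp only [neg_nonpos]
          exact intervalIntegral.integral_nonneg h.le (fun x _ => (inv_pos.mpr (hpos x)).le)
        have h2 : (0:ℝ) ≤ ∫ x in Set.Iic (0:ℝ), (μ x)⁻¹ :=
          setIntegral_nonneg measurableSet_Iic (fun x _ => (inv_pos.mpr (hpos x)).le)
        linarith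
    · right
      refine ⟨-∫ x in Set.Ici (0:ℝ), (μ x)⁻¹, ?_⟩
      rintro _ ⟨p, rfl⟩
      rw [hF]
      rcases le_or_gt 0 (p 0) with h | h
      · rw [intervalIntegral.integral_symm, neg_le_neg_iff, intervalIntegral.integral_of_le h]
        apply setIntegral_mono_set hI
        · exact Filter.Eventually.of_forall fun x => (inv_pos.mpr (hpos x)).le
        · exact Filter.Eventually.of_forall fun x hx => hx.1.le
      · have h1 : (0:ℝ) ≤ ∫ x in (p 0)..(0:ℝ), (μ x)⁻¹ :=
          intervalIntegral.integral_nonneg h.le (fun x _ => (inv_pos.mpr (hpos x)).le)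
        have h2 : (0:ℝ) ≤ ∫ x in Set.Ici (0:ℝ), (μ x)⁻¹ :=
          setIntegral_nonneg measurableSet_Ici (fun x _ => (inv_pos.mpr (hpos x)).le)
        linarith
  refine ⟨hharm, hnc, hbdd, ?_⟩
  intro hPar
  rcases hbdd with hb | hb
  · exact hnc (hPar F hFc2 (fun x => le_of_eq (congrFun hharm x).symm) hb)
  · have hnegharm : LB (warp μ) (fun q : Fin 2 → ℝ => -G (q 0)) = 0 := by
      have : ∀ t, HasDerivAt (fun s => -G s) ((1:ℝ) * (μ t)⁻¹) t := by
        intro t; have h := (hGd t).neg; rw [neg_neg, ← one_mul ((μ t)⁻¹)] at h; exact h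
      exact LB_warp_zero μ hpos (fun s => -G s) 1 this
    have hbdd' : BddAbove (Set.range (fun q : Fin 2 → ℝ => -G (q 0))) := by
      obtain ⟨b, hbb⟩ := hb
      refine ⟨-b, ?_⟩
      rintro _ ⟨p, rfl⟩
      simp only
      have : b ≤ F p := hbb ⟨p, rfl⟩
      rw [hFG] at this
      linarith
    have hc2' : ContDiff ℝ 2 (fun q : Fin 2 → ℝ => -G (q 0)) := by
      have := hFc2.neg
      rw [hFG] at this
      exact this
    have hconst := hPar (fun q : Fin 2 → ℝ => -G (q 0)) hc2'
      (fun x => le_of_eq (congrFun hnegharm x).symm) hbdd'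
    apply hnc
    intro p q
    have := hconst p q
    rw [hFG]
    show G (p 0) = G (q 0)
    linarith
end
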